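/- Suppose (𝒳, S, γ, (Λ_a)_{a∈A}) is a spectral decomposition system for a Euclidean space 𝔥 with {Λ_a : a ∈ A} closed in L(𝒳,𝔥). Let D be a nonempty S-invariant subset of 𝒳, let x, y ∈ 𝒳, and let a ∈ A. Then y ∈ N_F(x;D) if and only if Λ_a y ∈ N_F(Λ_a x; γ⁻¹(D)). -/

import Mathlib

/-!
Fréchet normality is read off the distance function along a ray: `y ∈ N_F(x; D)` iff
`x ∈ D` and, for every `ε > 0`, `d_D(x + t y) ≥ (‖y‖ - ε) t` for all small `t > 0`.
For `S`-invariant `D` one has `d_{γ⁻¹(D)} = d_D ∘ γ` (`γ` is 1-Lipschitz and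
`Λ_c '' D ⊆ γ⁻¹(D)`), and `d_D ∘ γ ∘ Λ_a = d_D ∘ τ = d_D`. As `Λ_a` is a linear isometry,
the condition for `(Λ_a x, Λ_a y, γ⁻¹(D))` is therefore the same as for `(x, y, D)`.
-/

open Filter Topology Set Metric
open scoped RealInnerProductSpace

noncomputable section

/-- A spectral decomposition system `(𝒳, S, γ, (Λ_a)_{a ∈ A})` for the space `H`:
`S` acts on `𝒳` by linear isometries (via `act`), `γ : H → 𝒳` is the spectral
mapping, each `Λ a : 𝒳 → H` is a linear isometry, and the axioms [A], [B], [C] hold,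
with `τ` the `S`-invariant ordering mapping of axiom [A]. -/
structure SDS (𝒳 H : Type*) [NormedAddCommGroup 𝒳] [InnerProductSpace ℝ 𝒳]
    [NormedAddCommGroup H] [InnerProductSpace ℝ H]
    (S : Type*) [Group S] (A : Type*) where
  act : S →* (𝒳 ≃ₗᵢ[ℝ] 𝒳)
  γ : H → 𝒳
  Λ : A → 𝒳 →ₗᵢ[ℝ] H
  τ : 𝒳 → 𝒳
  τ_inv : ∀ (s : S) (x : 𝒳), τ (act s x) = τ x
  τ_orbit : ∀ x : 𝒳, ∃ s : S, τ x = act s x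
  γΛ : ∀ (a : A) (x : 𝒳), γ (Λ a x) = τ x
  decomp : ∀ X : H, ∃ a : A, X = Λ a (γ X)
  inner_le : ∀ X Y : H, ⟪X, Y⟫ ≤ ⟪γ X, γ Y⟫

variable {𝒳 H S A : Type*} [NormedAddCommGroup 𝒳] [InnerProductSpace ℝ 𝒳]
    [NormedAddCommGroup H] [InnerProductSpace ℝ H] [Group S]

/-- The set `{Λ_a : a ∈ A}`, regarded as a subset of the space `L(𝒳, H)` of
continuous linear maps with the operator norm. -/
def SDS.LambdaSet (𝔖 : SDS 𝒳 H S A) : Set (𝒳 →L[ℝ] H) :=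
  {L | ∃ a : A, L = (𝔖.Λ a).toContinuousLinearMap}

/-- `A_X = {a ∈ A : X = Λ_a (γ X)}`. -/
def SDS.AX (𝔖 : SDS 𝒳 H S A) (X : H) : Set A := {a | X = 𝔖.Λ a (𝔖.γ X)}

/-- The Fréchet normal cone to `D` at `x`: empty if `x ∉ D`, and otherwise the set of
`y` with `limsup_{z → x, z ∈ D \ {x}} ⟨z - x, y⟩ / ‖z - x‖ ≤ 0`, expressed in ε-δ form. -/
def fNormal {E : Type*} [NormedAddCommGroup E] [InnerProductSpace ℝ E]
    (D : Set E) (x : E) : Set E :=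
  {y | x ∈ D ∧ ∀ ε : ℝ, 0 < ε → ∃ δ : ℝ, 0 < δ ∧
    ∀ z ∈ D, ‖z - x‖ < δ → ⟪z - x, y⟫ ≤ ε * ‖z - x‖}

section FrechetNormal

variable {E : Type*} [NormedAddCommGroup E] [InnerProductSpace ℝ E]

theorem norm_add_smul_sub_sq (x y z : E) (t : ℝ) :
    ‖x + t • y - z‖ ^ 2 = t ^ 2 * ‖y‖ ^ 2 - 2 * t * ⟪z - x, y⟫ + ‖z - x‖ ^ 2 := by
  rw [show x + t • y - z = t • y - (z - x) by abel, norm_sub_sq_real, real_inner_smul_left,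
    norm_smul, mul_pow, Real.norm_eq_abs, sq_abs, real_inner_comm]
  ring

theorem eventually_le_infDist_of_mem_fNormal {D : Set E} {x y : E} (h : y ∈ fNormal D x)
    {ε : ℝ} (hε : 0 < ε) : ∀ᶠ t in 𝓝[>] 0, (‖y‖ - ε) * t ≤ infDist (x + t • y) D := by
  obtain ⟨δ, hδ, hnear⟩ := h.2 ε hε
  filter_upwards [Ioo_mem_nhdsGT (show 0 < δ / (2 * ‖y‖ + 1) by positivity)] with t ⟨ht, htδ⟩
  rw [lt_div_iff₀ (by positivity)] at htδ
  refine (le_infDist ⟨x, h.1⟩).2 fun z hz => ?_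
  rw [dist_eq_norm]
  rcases lt_or_ge ‖z - x‖ δ with hzδ | hzδ
  · -- `‖x + t • y - z‖ ^ 2 ≥ t ^ 2 (‖y‖ ^ 2 - ε ^ 2) + (‖z - x‖ - t ε) ^ 2`
    have hsq := norm_add_smul_sub_sq x y z t
    have hinner := hnear z hz hzδ
    rcases le_or_gt ‖y‖ ε with hy | hy
    · nlinarith [norm_nonneg (x + t • y - z)]
    rw [← pow_le_pow_iff_left₀ (by positivity) (norm_nonneg _) two_ne_zero, hsq]
    nlinarith [sq_nonneg (‖z - x‖ - t * ε),
      mul_le_mul_of_nonneg_left hinner (by positivity : 0 ≤ 2 * t),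
      mul_nonneg (mul_nonneg (sq_nonneg t) hε.le) (sub_nonneg.2 hy.le)]
  · have htri : ‖z - x‖ ≤ t * ‖y‖ + ‖x + t • y - z‖ := by
      calc ‖z - x‖ = ‖t • y - (x + t • y - z)‖ := by congr 1; abel
        _ ≤ ‖t • y‖ + ‖x + t • y - z‖ := norm_sub_le _ _
        _ = t * ‖y‖ + ‖x + t • y - z‖ := by rw [norm_smul, Real.norm_of_nonneg ht.le]
    nlinarith [norm_nonneg y]

theorem mem_fNormal_of_eventually_le_infDist {D : Set E} {x y : E} (hx : x ∈ D)
    (h : ∀ ε > 0, ∀ᶠ t in 𝓝[>] 0, (‖y‖ - ε) * t ≤ infDist (x + t • y) D) :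
    y ∈ fNormal D x := by
  refine ⟨hx, fun ε hε => ?_⟩
  -- `ε'` is chosen so that `ε' ≤ ε` and `2 ε' ‖y‖ ≤ ε ^ 2`
  set ε' := ε ^ 2 / (2 * ‖y‖ + ε)
  have hε'_mul : ε' * (2 * ‖y‖ + ε) = ε ^ 2 := div_mul_cancel₀ _ (by positivity)
  have hε'_pos : 0 < ε' := by positivity
  obtain ⟨T, hT, hTsub⟩ := mem_nhdsGT_iff_exists_Ioo_subset.1 (h ε' hε'_pos)
  refine ⟨T * ε, mul_pos hT hε, fun z hz hzx => ?_⟩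
  rcases (norm_nonneg (z - x)).eq_or_lt with hρ | hρ
  · rw [← hρ, norm_eq_zero.1 hρ.symm, inner_zero_left, mul_zero]
  set t := ‖z - x‖ / ε
  have ht : 0 < t := div_pos hρ hε
  have htε : t * ε = ‖z - x‖ := div_mul_cancel₀ _ hε.ne'
  have hlow : (‖y‖ - ε') * t ≤ ‖x + t • y - z‖ :=
    (hTsub ⟨ht, (div_lt_iff₀ hε).2 hzx⟩ : (‖y‖ - ε') * t ≤ _).trans
      ((infDist_le_dist_of_mem hz).trans_eq (dist_eq_norm _ _))
  have hsq := norm_add_smul_sub_sq x y z t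
  by_contra! hgt
  have hw : ‖x + t • y - z‖ ^ 2 < t ^ 2 * (‖y‖ ^ 2 - ε ^ 2) := by
    rw [hsq, ← htε]
    nlinarith [mul_lt_mul_of_pos_left hgt (by positivity : 0 < 2 * t)]
  have hy : ε < ‖y‖ := by
    have : ε ^ 2 < ‖y‖ ^ 2 := by nlinarith [sq_nonneg ‖x + t • y - z‖]
    exact (pow_lt_pow_iff_left₀ hε.le (norm_nonneg y) two_ne_zero).1 this
  have hε'ε : ε' ≤ ε := by nlinarith [norm_nonneg y]
  have hlow_sq := pow_le_pow_left₀ (by nlinarith) hlow 2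
  rw [mul_pow] at hlow_sq
  have key : (‖y‖ - ε') ^ 2 < ‖y‖ ^ 2 - ε ^ 2 :=
    lt_of_mul_lt_mul_right (by linarith) (sq_nonneg t)
  nlinarith [mul_pos hε'_pos hε]

theorem mem_fNormal_iff_eventually_le_infDist {D : Set E} {x y : E} :
    y ∈ fNormal D x ↔
      x ∈ D ∧ ∀ ε > 0, ∀ᶠ t in 𝓝[>] 0, (‖y‖ - ε) * t ≤ infDist (x + t • y) D :=
  ⟨fun h => ⟨h.1, fun _ hε => eventually_le_infDist_of_mem_fNormal h hε⟩,
    fun h => mem_fNormal_of_eventually_le_infDist h.1 h.2⟩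

end FrechetNormal

namespace SDS

variable (𝔖 : SDS 𝒳 H S A)

def IsInvariant (D : Set 𝒳) : Prop :=
  ∀ (s : S), ∀ x ∈ D, 𝔖.act s x ∈ D

theorem norm_γ (X : H) : ‖𝔖.γ X‖ = ‖X‖ := by
  obtain ⟨a, ha⟩ := 𝔖.decomp X
  conv_rhs => rw [ha, LinearIsometry.norm_map]

theorem dist_γ_le (X Y : H) : dist (𝔖.γ X) (𝔖.γ Y) ≤ dist X Y := by
  rw [dist_eq_norm, dist_eq_norm, ← pow_le_pow_iff_left₀ (norm_nonneg _) (norm_nonneg _)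
    two_ne_zero, norm_sub_sq_real, norm_sub_sq_real, norm_γ, norm_γ]
  linarith [𝔖.inner_le X Y]

variable {𝔖} {D : Set 𝒳}

theorem IsInvariant.act_mem_iff (hD : 𝔖.IsInvariant D) (s : S) (x : 𝒳) :
    𝔖.act s x ∈ D ↔ x ∈ D :=
  ⟨fun h => by simpa using hD s⁻¹ _ h, hD s x⟩

theorem IsInvariant.image_act (hD : 𝔖.IsInvariant D) (s : S) : 𝔖.act s '' D = D :=
  (image_subset_iff.2 (hD s)).antisymm fun x hx => ⟨𝔖.act s⁻¹ x, hD _ _ hx, by simp⟩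

theorem IsInvariant.τ_mem_iff (hD : 𝔖.IsInvariant D) (x : 𝒳) : 𝔖.τ x ∈ D ↔ x ∈ D := by
  obtain ⟨s, hs⟩ := 𝔖.τ_orbit x
  rw [hs, hD.act_mem_iff]

theorem IsInvariant.Λ_mem_preimage_γ_iff (hD : 𝔖.IsInvariant D) (a : A) (x : 𝒳) :
    𝔖.Λ a x ∈ 𝔖.γ ⁻¹' D ↔ x ∈ D := by
  rw [mem_preimage, 𝔖.γΛ, hD.τ_mem_iff]

theorem IsInvariant.infDist_τ (hD : 𝔖.IsInvariant D) (x : 𝒳) :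
    infDist (𝔖.τ x) D = infDist x D := by
  obtain ⟨s, hs⟩ := 𝔖.τ_orbit x
  conv_lhs => rw [hs, ← hD.image_act s]
  exact infDist_image (𝔖.act s).isometry

theorem IsInvariant.infDist_preimage_γ (hD : 𝔖.IsInvariant D) (hne : D.Nonempty) (X : H) :
    infDist X (𝔖.γ ⁻¹' D) = infDist (𝔖.γ X) D := by
  obtain ⟨a, ha⟩ := 𝔖.decomp X
  have hsub : 𝔖.Λ a '' D ⊆ 𝔖.γ ⁻¹' D := by
    rintro _ ⟨x, hx, rfl⟩
    exact (hD.Λ_mem_preimage_γ_iff a x).2 hx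
  apply le_antisymm
  · calc infDist X (𝔖.γ ⁻¹' D) ≤ infDist X (𝔖.Λ a '' D) :=
          infDist_le_infDist_of_subset hsub (hne.image _)
      _ = infDist (𝔖.γ X) D := by
          conv_lhs => rw [ha]
          exact infDist_image (𝔖.Λ a).isometry
  · exact (le_infDist ((hne.image _).mono hsub)).2 fun Y hY =>
      (infDist_le_dist_of_mem (show 𝔖.γ Y ∈ D from hY)).trans (𝔖.dist_γ_le X Y)

theorem IsInvariant.infDist_Λ_preimage_γ (hD : 𝔖.IsInvariant D) (hne : D.Nonempty) (a : A)
    (x : 𝒳) : infDist (𝔖.Λ a x) (𝔖.γ ⁻¹' D) = infDist x D := by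
  rw [hD.infDist_preimage_γ hne, 𝔖.γΛ, hD.infDist_τ]

end SDS

theorem frechet_normal_lambda_iff_general
    (𝔖 : SDS 𝒳 H S A)
    (D : Set 𝒳) (hD : D.Nonempty) (hDinv : ∀ (s : S), ∀ x ∈ D, 𝔖.act s x ∈ D)
    (x y : 𝒳) (a : A) :
    y ∈ fNormal D x ↔ 𝔖.Λ a y ∈ fNormal (𝔖.γ ⁻¹' D) (𝔖.Λ a x) := by
  have hinv : 𝔖.IsInvariant D := hDinv
  have hline (t : ℝ) : 𝔖.Λ a x + t • 𝔖.Λ a y = 𝔖.Λ a (x + t • y) := by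
    rw [map_add, map_smul]
  simp only [mem_fNormal_iff_eventually_le_infDist, hinv.Λ_mem_preimage_γ_iff,
    LinearIsometry.norm_map, hline, hinv.infDist_Λ_preimage_γ hD]

/-- For a nonempty `S`-invariant `D ⊆ 𝒳`, `x, y ∈ 𝒳` and `a ∈ A`:
`y ∈ N_F(x; D)` iff `Λ_a y ∈ N_F(Λ_a x; γ⁻¹(D))`. -/
theorem frechet_normal_lambda_iff
    [FiniteDimensional ℝ 𝒳] [FiniteDimensional ℝ H]
    (𝔖 : SDS 𝒳 H S A) (hcl : IsClosed 𝔖.LambdaSet)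
    (D : Set 𝒳) (hD : D.Nonempty) (hDinv : ∀ (s : S), ∀ x ∈ D, 𝔖.act s x ∈ D)
    (x y : 𝒳) (a : A) :
    y ∈ fNormal D x ↔ 𝔖.Λ a y ∈ fNormal (𝔖.γ ⁻¹' D) (𝔖.Λ a x) :=
  frechet_normal_lambda_iff_general 𝔖 D hD hDinv x y a
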